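/- arXiv:2212.01008 — 6 statements merged into one kernel-verified Lean document; each statement's English description precedes it below -/
import Mathlib

section
/- Let Γ = Γ₀ ⊕ Γ₁ be a Z₂-graded algebra over a field F such that: Γ₀ is a unital associative commutative algebra, [Γ₀, Γ₁] = 0, Γ₀ associates with everything, Γ₁² ⊆ Γ₀, odd elements anticommute (xy + yx = 0 for x,y ∈ Γ₁), and the cyclic identity (xy)z + (yz)x + (zx)y = 0 holds for x,y,z ∈ Γ₁. Then Γ is a Jordan superalgebra, i.e., it satisfies the super Jordan identity (xy,z,t) + (−1)^{\bar y\bar z+\bar y\bar t+\bar z\bar t}(xt,z,y) + (−1)^{\bar x(\bar y+\bar z+\bar t)+\bar z\bar t}(yt,z,x) = 0 on homogeneous elements. -/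
/-!
The even part Γ₀, and with it Γ₁Γ₁, lies in the centre of Γ (it commutes and associates with
everything). So every associator with an even entry vanishes and an even factor can be pulled out
of an associator. Of the sixteen parity patterns only three then leave nonzero terms, and each
reduces to the symmetry (u, v, w) = (w, v, u) of the associator on odd elements, which follows from
anticommutativity because v w and v u are central.
-/

section Associator

variable {R : Type*} [NonUnitalNonAssocRing R] {a : R}

theorem associator_eq_zero_of_mem_center_left (ha : a ∈ Set.center R) (y z : R) :
    associator a y z = 0 :=
  sub_eq_zero.mpr (ha.left_assoc y z).symm

theorem associator_eq_zero_of_mem_center_mid (ha : a ∈ Set.center R) (x z : R) :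
    associator x a z = 0 :=
  sub_eq_zero.mpr (ha.mid_assoc x z)

theorem associator_eq_zero_of_mem_center_right (ha : a ∈ Set.center R) (x y : R) :
    associator x y a = 0 :=
  sub_eq_zero.mpr (ha.right_assoc x y)

theorem associator_center_mul (ha : a ∈ Set.center R) (x y z : R) :
    associator (a * x) y z = associator x y z * a := by
  simp only [associator_apply, ← ha.left_assoc, ← (ha.comm _).eq, mul_sub]

theorem associator_mul_center (ha : a ∈ Set.center R) (x y z : R) :
    associator (x * a) y z = associator x y z * a := by
  rw [← (ha.comm x).eq, associator_center_mul ha]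

theorem associator_eq_associator_of_anticomm {u v w : R} (huv : u * v + v * u = 0)
    (hwv : w * v + v * w = 0) (hu : Commute u (v * w)) (hw : Commute w (v * u)) :
    associator u v w = associator w v u := by
  rw [associator_apply, associator_apply, hu.eq, hw.eq, eq_neg_of_add_eq_zero_left huv,
    eq_neg_of_add_eq_zero_left hwv, neg_mul, neg_mul]
  abel

end Associator

theorem mem_center_of_sup_eq_top {F R : Type*} [Semiring F] [NonUnitalNonAssocSemiring R]
    [Module F R] {A B : Submodule F R} (hAB : A ⊔ B = ⊤) {a : R}
    (hA : ∀ b ∈ A, a * b = b * a) (hB : ∀ b ∈ B, a * b = b * a)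
    (hleft : ∀ x y : R, a * x * y = a * (x * y)) (hright : ∀ x y : R, x * y * a = x * (y * a)) :
    a ∈ Set.center R where
  comm x := by
    obtain ⟨b, hb, c, hc, rfl⟩ := Submodule.mem_sup.mp (hAB ▸ Submodule.mem_top : x ∈ A ⊔ B)
    rw [Commute, SemiconjBy, mul_add, add_mul, hA b hb, hB c hc]
  left_assoc x y := (hleft x y).symm
  right_assoc := hright

theorem superJordan_identity_of_anticomm {R : Type*} [NonUnitalNonAssocRing R] (S : Set R)
    (hanti : ∀ u ∈ S, ∀ v ∈ S, u * v + v * u = 0)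
    (hmul : ∀ u ∈ S, ∀ v ∈ S, u * v ∈ Set.center R) (px py pz pt : ZMod 2) {x y z t : R}
    (hx : x ∈ if px = 0 then Set.center R else S) (hy : y ∈ if py = 0 then Set.center R else S)
    (hz : z ∈ if pz = 0 then Set.center R else S) (ht : t ∈ if pt = 0 then Set.center R else S) :
    associator (x * y) z t
      + ((-1 : ℤ) ^ (py * pz + py * pt + pz * pt : ZMod 2).val) • associator (x * t) z y
      + ((-1 : ℤ) ^ (px * (py + pz + pt) + pz * pt : ZMod 2).val) • associator (y * t) z x = 0 := by
  have hswap : ∀ u ∈ S, ∀ v ∈ S, ∀ w ∈ S, associator u v w = associator w v u :=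
    fun u hu v hv w hw => associator_eq_associator_of_anticomm (hanti u hu v hv) (hanti w hw v hv)
      ((hmul v hv w hw).comm u).symm ((hmul v hv u hu).comm w).symm
  have hparity : ∀ p : ZMod 2, p = 0 ∨ p = 1 := by decide
  rcases hparity px with rfl | rfl <;> rcases hparity py with rfl | rfl <;>
    rcases hparity pz with rfl | rfl <;> rcases hparity pt with rfl | rfl <;>
    simp only [if_pos, if_neg, one_ne_zero, not_false_eq_true] at hx hy hz ht <;>
    simp +decide [hx, hy, hz, ht, hmul, hswap, associator_center_mul,
      associator_mul_center, associator_eq_zero_of_mem_center_left,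
      associator_eq_zero_of_mem_center_mid, associator_eq_zero_of_mem_center_right]

theorem gammaAlgebra_is_jordan_superalgebra_general
    (F Γ : Type*) [Field F] [NonUnitalNonAssocRing Γ] [Module F Γ]
    (Γ₀ Γ₁ : Submodule F Γ)
    -- Z₂-grading
    (hsum : Γ₀ ⊔ Γ₁ = ⊤)
    (h11 : ∀ u ∈ Γ₁, ∀ v ∈ Γ₁, u * v ∈ Γ₀)
    -- Γ₀ is a unital associative commutative algebra
    (hcomm0 : ∀ a ∈ Γ₀, ∀ b ∈ Γ₀, a * b = b * a)
    -- [Γ₀,Γ₁] = 0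
    (hcen : ∀ a ∈ Γ₀, ∀ v ∈ Γ₁, a * v = v * a)
    -- (Γ₀, Γ, Γ) = 0 : Γ₀ associates with everything
    (hLassoc : ∀ a ∈ Γ₀, ∀ x y : Γ, (a * x) * y = a * (x * y))
    (hRassoc : ∀ a ∈ Γ₀, ∀ x y : Γ, (x * y) * a = x * (y * a))
    -- odd elements anticommute
    (hanti : ∀ u ∈ Γ₁, ∀ v ∈ Γ₁, u * v + v * u = 0) :
    -- super Jordan identity on homogeneous elements
    ∀ (px py pz pt : ZMod 2) (x y z t : Γ),
      x ∈ (if px = 0 then Γ₀ else Γ₁) →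
      y ∈ (if py = 0 then Γ₀ else Γ₁) →
      z ∈ (if pz = 0 then Γ₀ else Γ₁) →
      t ∈ (if pt = 0 then Γ₀ else Γ₁) →
      (((x * y) * z) * t - (x * y) * (z * t))
        + ((-1 : ℤ) ^ (py * pz + py * pt + pz * pt : ZMod 2).val) •
            (((x * t) * z) * y - (x * t) * (z * y))
        + ((-1 : ℤ) ^ (px * (py + pz + pt) + pz * pt : ZMod 2).val) •
            (((y * t) * z) * x - (y * t) * (z * x)) = 0 := by
  intro px py pz pt x y z t hx hy hz ht
  have hcenter : ∀ a ∈ Γ₀, a ∈ Set.center Γ := fun a ha =>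
    mem_center_of_sup_eq_top hsum (hcomm0 a ha) (hcen a ha) (hLassoc a ha) (hRassoc a ha)
  have hhom : ∀ (p : ZMod 2) (w : Γ), w ∈ (if p = 0 then Γ₀ else Γ₁) →
      w ∈ (if p = 0 then Set.center Γ else (Γ₁ : Set Γ)) := by
    intro p w hw
    split_ifs at hw ⊢
    exacts [hcenter w hw, hw]
  simpa only [associator_apply] using
    superJordan_identity_of_anticomm (Γ₁ : Set Γ) hanti (fun u hu v hv => hcenter _ (h11 u hu v hv))
      px py pz pt (hhom px x hx) (hhom py y hy) (hhom pz z hz) (hhom pt t ht)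

/-- A Z₂-graded algebra Γ = Γ₀ ⊕ Γ₁ with Γ₀ unital associative
commutative, [Γ₀,Γ₁] = 0, vanishing associators with even first entry, Γ₁² ⊆ Γ₀,
anticommuting odd elements and the cyclic identity on odd elements, is a Jordan
superalgebra: the super Jordan identity holds on homogeneous elements. -/
theorem gammaAlgebra_is_jordan_superalgebra
    (F Γ : Type*) [Field F] [NonUnitalNonAssocRing Γ] [Module F Γ]
    (Γ₀ Γ₁ : Submodule F Γ)
    -- Z₂-grading
    (hsum : Γ₀ ⊔ Γ₁ = ⊤) (hdis : Γ₀ ⊓ Γ₁ = ⊥)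
    (h00 : ∀ a ∈ Γ₀, ∀ b ∈ Γ₀, a * b ∈ Γ₀)
    (h01 : ∀ a ∈ Γ₀, ∀ v ∈ Γ₁, a * v ∈ Γ₁)
    (h10 : ∀ v ∈ Γ₁, ∀ a ∈ Γ₀, v * a ∈ Γ₁)
    (h11 : ∀ u ∈ Γ₁, ∀ v ∈ Γ₁, u * v ∈ Γ₀)
    -- Γ₀ is a unital associative commutative algebra
    (e : Γ) (he : e ∈ Γ₀) (hunit : ∀ a ∈ Γ₀, e * a = a ∧ a * e = a)
    (hassoc0 : ∀ a ∈ Γ₀, ∀ b ∈ Γ₀, ∀ c ∈ Γ₀, (a * b) * c = a * (b * c))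
    (hcomm0 : ∀ a ∈ Γ₀, ∀ b ∈ Γ₀, a * b = b * a)
    -- [Γ₀,Γ₁] = 0
    (hcen : ∀ a ∈ Γ₀, ∀ v ∈ Γ₁, a * v = v * a)
    -- (Γ₀, Γ, Γ) = 0 : Γ₀ associates with everything
    (hLassoc : ∀ a ∈ Γ₀, ∀ x y : Γ, (a * x) * y = a * (x * y))
    (hMassoc : ∀ a ∈ Γ₀, ∀ x y : Γ, (x * a) * y = x * (a * y))
    (hRassoc : ∀ a ∈ Γ₀, ∀ x y : Γ, (x * y) * a = x * (y * a))
    -- odd elements anticommute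
    (hanti : ∀ u ∈ Γ₁, ∀ v ∈ Γ₁, u * v + v * u = 0)
    -- cyclic identity on odd elements
    (hcyc : ∀ u ∈ Γ₁, ∀ v ∈ Γ₁, ∀ w ∈ Γ₁, (u * v) * w + (v * w) * u + (w * u) * v = 0) :
    -- super Jordan identity on homogeneous elements
    ∀ (px py pz pt : ZMod 2) (x y z t : Γ),
      x ∈ (if px = 0 then Γ₀ else Γ₁) →
      y ∈ (if py = 0 then Γ₀ else Γ₁) →
      z ∈ (if pz = 0 then Γ₀ else Γ₁) →
      t ∈ (if pt = 0 then Γ₀ else Γ₁) →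
      (((x * y) * z) * t - (x * y) * (z * t))
        + ((-1 : ℤ) ^ (py * pz + py * pt + pz * pt : ZMod 2).val) •
            (((x * t) * z) * y - (x * t) * (z * y))
        + ((-1 : ℤ) ^ (px * (py + pz + pt) + pz * pt : ZMod 2).val) •
            (((y * t) * z) * x - (y * t) * (z * x)) = 0 :=
  gammaAlgebra_is_jordan_superalgebra_general F Γ Γ₀ Γ₁ hsum h11 hcomm0 hcen hLassoc hRassoc hanti
end

section
/- Let F be a field, A a commutative integral domain over F. Then the superalgebra Γ(A) = A ⊕ A² with products a·b=ab, a·(b,c)=(ab,ac), (a,b)·(c,d)=ad−bc is prime: if I, J are nonzero ideals of Γ(A) then IJ ≠ 0. -/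
/-- The multiplication of Γ(A) = A ⊕ A², on elements written as (even part, odd pair):
a·b = ab, a·(b,c) = (ab,ac), (a,b)·(c,d) = ad − bc. -/
def gammaMul {A : Type*} [CommRing A] (x y : A × A × A) : A × A × A :=
  (x.1 * y.1 + (x.2.1 * y.2.2 - x.2.2 * y.2.1),
   (x.1 * y.2.1 + y.1 * x.2.1, x.1 * y.2.2 + y.1 * x.2.2))

/-- An ideal of the superalgebra Γ(A): an additive subgroup closed under
multiplication by arbitrary elements of Γ(A) on both sides. -/
def GammaIdeal {A : Type*} [CommRing A] (I : Set (A × A × A)) : Prop :=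
  (0 : A × A × A) ∈ I ∧ (∀ x ∈ I, ∀ y ∈ I, x + y ∈ I) ∧ (∀ x ∈ I, -x ∈ I) ∧
    ∀ x ∈ I, ∀ y : A × A × A, gammaMul x y ∈ I ∧ gammaMul y x ∈ I

/-!
Take x ∈ I and y ∈ J with nonzero even parts a and d; these exist because an odd element
(0, b, c) ≠ 0 of an ideal multiplies (0, 0, b) or (0, -c, 0) to (b², 0, 0) or (c², 0, 0).
If the even part of xy vanishes, then the even part of x²y is -a²d ≠ 0, and x² ∈ I.
-/

section

variable {A : Type*} [CommRing A] {I : Set (A × A × A)}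

lemma GammaIdeal.gammaMul_mem (hI : GammaIdeal I) {x : A × A × A} (hx : x ∈ I)
    (y : A × A × A) : gammaMul x y ∈ I :=
  (hI.2.2.2 x hx y).1

lemma GammaIdeal.exists_ne_zero (hI : GammaIdeal I) (hI0 : I ≠ {0}) : ∃ z ∈ I, z ≠ 0 := by
  by_contra! h
  exact hI0 (Set.eq_singleton_iff_unique_mem.2 ⟨hI.1, h⟩)

lemma GammaIdeal.exists_fst_ne_zero [NoZeroDivisors A] (hI : GammaIdeal I) (hI0 : I ≠ {0}) :
    ∃ x ∈ I, x.1 ≠ 0 := by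
  obtain ⟨⟨a, b, c⟩, hzI, hz0⟩ := hI.exists_ne_zero hI0
  by_cases ha : a = 0
  · subst ha
    by_cases hb : b = 0
    · subst hb
      have hc : c ≠ 0 := by rintro rfl; exact hz0 rfl
      refine ⟨_, hI.gammaMul_mem hzI (0, -c, 0), ?_⟩
      simpa [gammaMul] using mul_self_ne_zero.2 hc
    · refine ⟨_, hI.gammaMul_mem hzI (0, 0, b), ?_⟩
      simpa [gammaMul] using mul_self_ne_zero.2 hb
  · exact ⟨_, hzI, ha⟩

lemma fst_gammaMul_gammaMul_self (x y : A × A × A) :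
    (gammaMul (gammaMul x x) y).1 = 2 * x.1 * (gammaMul x y).1 - x.1 ^ 2 * y.1 := by
  simp only [gammaMul]
  ring

end

theorem gammaA_prime_general (A : Type*) [CommRing A] [IsDomain A]
    (I J : Set (A × A × A)) (hI : GammaIdeal I) (hJ : GammaIdeal J)
    (hI0 : I ≠ {0}) (hJ0 : J ≠ {0}) :
    ∃ x ∈ I, ∃ y ∈ J, gammaMul x y ≠ 0 := by
  obtain ⟨x, hxI, hx⟩ := hI.exists_fst_ne_zero hI0
  obtain ⟨y, hyJ, hy⟩ := hJ.exists_fst_ne_zero hJ0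
  by_cases hxy : (gammaMul x y).1 = 0
  · refine ⟨gammaMul x x, hI.gammaMul_mem hxI x, y, hyJ, fun h => ?_⟩
    have hfst := fst_gammaMul_gammaMul_self x y
    rw [h, hxy] at hfst
    exact mul_ne_zero (pow_ne_zero 2 hx) hy (by simpa using hfst.symm)
  · exact ⟨x, hxI, y, hyJ, fun h => hxy (by rw [h]; rfl)⟩

/-- For a commutative integral domain A over a field F, the
superalgebra Γ(A) = A ⊕ A² is prime: if I, J are nonzero ideals then IJ ≠ 0. -/
theorem gammaA_prime (F A : Type*) [Field F] [CommRing A] [IsDomain A] [Algebra F A]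
    (I J : Set (A × A × A)) (hI : GammaIdeal I) (hJ : GammaIdeal J)
    (hI0 : I ≠ {0}) (hJ0 : J ≠ {0}) :
    ∃ x ∈ I, ∃ y ∈ J, gammaMul x y ≠ 0 :=
  gammaA_prime_general A I J hI hJ hI0 hJ0
end

section
/- Let F be a field, A_n = F[x₁,…,x_n, y₁,…,y_n], and α_{ij} = x_i y_j − x_j y_i for i < j. The set B_n of products α_{i₁j₁}α_{i₂j₂}⋯α_{i_r j_r} with i₁ ≤ i₂ ≤ ⋯ ≤ i_r, j₁ ≤ j₂ ≤ ⋯ ≤ j_r, and i_s < j_s for each s (together with 1 for r = 0), is linearly independent over F in A_n. -/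
/-!
Weight a monomial by `∑ᵢ i · (exponent of xᵢ)`. For `i < j` the term `xᵢyⱼ` of `αᵢⱼ` is strictly
lighter than `xⱼyᵢ`, and a unique lightest term is multiplicative, so a standard monomial has a
unique lightest term, `∏ₛ x_{iₛ} y_{jₛ}`, with nonzero coefficient. Since both index sequences are
sorted, this monomial determines the standard monomial. In a vanishing linear combination, the
lightest term of a summand of least weight occurs in no other summand, so its coefficient is `0`.
-/

open MvPolynomial

/-- A list of index pairs [(i₁,j₁),…,(i_r,j_r)] is standard if i₁ ≤ ⋯ ≤ i_r,
j₁ ≤ ⋯ ≤ j_r, and i_s < j_s for each s. -/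
def IsStandard {n : ℕ} (l : List (Fin n × Fin n)) : Prop :=
  (∀ p ∈ l, p.1 < p.2) ∧ (l.map Prod.fst).Chain' (· ≤ ·) ∧ (l.map Prod.snd).Chain' (· ≤ ·)

namespace MvPolynomial

variable {σ R M : Type*}

section CommSemiring

variable [CommSemiring R] [AddCommMonoid M] [PartialOrder M]

def IsLowestWeightExponent (w : (σ →₀ ℕ) →+ M) (f : MvPolynomial σ R) (a : σ →₀ ℕ) : Prop :=
  coeff a f ≠ 0 ∧ ∀ d, coeff d f ≠ 0 → d ≠ a → w a < w d

variable {w : (σ →₀ ℕ) →+ M}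

theorem IsLowestWeightExponent.weight_le {f : MvPolynomial σ R} {a d : σ →₀ ℕ}
    (hf : IsLowestWeightExponent w f a) (hd : coeff d f ≠ 0) : w a ≤ w d := by
  rcases eq_or_ne d a with rfl | hda
  · exact le_rfl
  · exact (hf.2 d hd hda).le

theorem isLowestWeightExponent_one [Nontrivial R] :
    IsLowestWeightExponent w (1 : MvPolynomial σ R) 0 := by
  classical
  refine ⟨by simp, fun d hd hd0 => absurd ?_ hd⟩
  rw [coeff_one, if_neg (Ne.symm hd0)]

variable [IsOrderedCancelAddMonoid M] {f g : MvPolynomial σ R} {a b : σ →₀ ℕ}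

theorem IsLowestWeightExponent.weight_add_lt (hf : IsLowestWeightExponent w f a)
    (hg : IsLowestWeightExponent w g b) {d e : σ →₀ ℕ} (hd : coeff d f ≠ 0) (he : coeff e g ≠ 0)
    (hde : (d, e) ≠ (a, b)) : w a + w b < w d + w e := by
  rcases eq_or_ne d a with rfl | hda
  · exact add_lt_add_of_le_of_lt le_rfl (hg.2 e he fun h => hde (by rw [h]))
  · exact add_lt_add_of_lt_of_le (hf.2 d hd hda) (hg.weight_le he)

theorem IsLowestWeightExponent.mul [NoZeroDivisors R] (hf : IsLowestWeightExponent w f a)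
    (hg : IsLowestWeightExponent w g b) : IsLowestWeightExponent w (f * g) (a + b) := by
  classical
  constructor
  · have hsingle : ∀ x ∈ Finset.HasAntidiagonal.antidiagonal (a + b), x ≠ (a, b) →
        coeff x.1 f * coeff x.2 g = 0 := by
      intro x hx hxab
      by_contra hne
      have hlt := hf.weight_add_lt hg (left_ne_zero_of_mul hne) (right_ne_zero_of_mul hne) hxab
      rw [← map_add, ← map_add, Finset.HasAntidiagonal.mem_antidiagonal.mp hx] at hlt
      exact hlt.false
    rw [coeff_mul, Finset.sum_eq_single_of_mem (a, b) (by simp) hsingle]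
    exact mul_ne_zero hf.1 hg.1
  · intro d hd hdab
    rw [coeff_mul] at hd
    obtain ⟨x, hx, hne⟩ := Finset.exists_ne_zero_of_sum_ne_zero hd
    have hxab : x ≠ (a, b) := by
      rintro rfl
      exact hdab (Finset.HasAntidiagonal.mem_antidiagonal.mp hx).symm
    have hlt := hf.weight_add_lt hg (left_ne_zero_of_mul hne) (right_ne_zero_of_mul hne) hxab
    rwa [← map_add, ← map_add, Finset.HasAntidiagonal.mem_antidiagonal.mp hx] at hlt

theorem IsLowestWeightExponent.list_prod [NoZeroDivisors R] [Nontrivial R] {β : Type*}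
    {F : β → MvPolynomial σ R} {e : β → σ →₀ ℕ} {l : List β}
    (hl : ∀ p ∈ l, IsLowestWeightExponent w (F p) (e p)) :
    IsLowestWeightExponent w (l.map F).prod (l.map e).sum := by
  induction l with
  | nil => exact isLowestWeightExponent_one
  | cons p t ih =>
    simpa only [List.map_cons, List.prod_cons, List.sum_cons] using
      (hl p List.mem_cons_self).mul (ih fun q hq => hl q (List.mem_cons_of_mem p hq))

end CommSemiring

theorem linearIndependent_of_isLowestWeightExponent [CommRing R] [NoZeroDivisors R]
    [AddCommMonoid M] [LinearOrder M] {ι : Type*} {w : (σ →₀ ℕ) →+ M}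
    {f : ι → MvPolynomial σ R} {e : ι → σ →₀ ℕ} (he : Function.Injective e)
    (hf : ∀ i, IsLowestWeightExponent w (f i) (e i)) : LinearIndependent R f := by
  classical
  refine linearIndependent_iff'.mpr fun s g hsum i hi => by_contra fun hgi => ?_
  obtain ⟨i₀, hi₀, hmin⟩ := (s.filter (g · ≠ 0)).exists_min_image (fun j => w (e j))
    ⟨i, Finset.mem_filter.mpr ⟨hi, hgi⟩⟩
  obtain ⟨hi₀s, hgi₀⟩ := Finset.mem_filter.mp hi₀
  have hothers : ∀ j ∈ s, j ≠ i₀ → coeff (e i₀) (g j • f j) = 0 := by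
    intro j hj hji₀
    rw [coeff_smul, smul_eq_mul]
    by_contra hne
    have hlt := (hf j).2 _ (right_ne_zero_of_mul hne) (he.ne hji₀.symm)
    exact hlt.not_ge (hmin j (Finset.mem_filter.mpr ⟨hj, left_ne_zero_of_mul hne⟩))
  have hcoeff := congrArg (coeff (e i₀)) hsum
  rw [coeff_sum, Finset.sum_eq_single_of_mem i₀ hi₀s hothers, coeff_zero, coeff_smul,
    smul_eq_mul] at hcoeff
  exact mul_ne_zero hgi₀ (hf i₀).1 hcoeff

end MvPolynomial

section Plucker

variable {n : ℕ}

noncomputable def xIndexWeight (n : ℕ) : (Fin n ⊕ Fin n →₀ ℕ) →+ ℕ :=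
  Finsupp.weight (Sum.elim (fun i : Fin n => (i : ℕ)) 0)

noncomputable def diagonalExponent (p : Fin n × Fin n) : Fin n ⊕ Fin n →₀ ℕ :=
  Finsupp.single (Sum.inl p.1) 1 + Finsupp.single (Sum.inr p.2) 1

theorem xIndexWeight_diagonalExponent (p : Fin n × Fin n) :
    xIndexWeight n (diagonalExponent p) = p.1 := by
  simp [xIndexWeight, diagonalExponent, Finsupp.weight_single]

theorem isLowestWeightExponent_minor {R : Type*} [CommRing R] [Nontrivial R] {i j : Fin n}
    (hij : i < j) :
    IsLowestWeightExponent (xIndexWeight n)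
      (X (Sum.inl i) * X (Sum.inr j) - X (Sum.inl j) * X (Sum.inr i) : MvPolynomial _ R)
      (diagonalExponent (i, j)) := by
  classical
  have hminor : (X (Sum.inl i) * X (Sum.inr j) - X (Sum.inl j) * X (Sum.inr i) :
      MvPolynomial _ R) = monomial (diagonalExponent (i, j)) 1 - monomial (diagonalExponent (j, i)) 1 := by
    simp only [diagonalExponent, X, monomial_mul, one_mul]
  have hne : diagonalExponent (i, j) ≠ diagonalExponent (j, i) := fun h => by
    simpa [diagonalExponent, hij.ne] using congrArg (· (Sum.inl i)) h
  rw [hminor]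
  refine ⟨?_, fun d hd hda => ?_⟩
  · rw [coeff_sub, coeff_monomial, coeff_monomial, if_pos rfl, if_neg hne.symm, sub_zero]
    exact one_ne_zero
  have hdb : d = diagonalExponent (j, i) := by
    by_contra hdb
    rw [coeff_sub, coeff_monomial, coeff_monomial, if_neg (Ne.symm hda), if_neg (Ne.symm hdb),
      sub_zero] at hd
    exact hd rfl
  simpa [hdb, xIndexWeight_diagonalExponent] using hij

theorem sum_map_diagonalExponent_inl (l : List (Fin n × Fin n)) (k : Fin n) :
    (l.map diagonalExponent).sum (Sum.inl k) = (l.map Prod.fst).count k := by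
  induction l with
  | nil => rfl
  | cons p t ih =>
    simp [ih, diagonalExponent, List.count_cons, Finsupp.single_apply, add_comm]

theorem sum_map_diagonalExponent_inr (l : List (Fin n × Fin n)) (k : Fin n) :
    (l.map diagonalExponent).sum (Sum.inr k) = (l.map Prod.snd).count k := by
  induction l with
  | nil => rfl
  | cons p t ih =>
    simp [ih, diagonalExponent, List.count_cons, Finsupp.single_apply, add_comm]

theorem eq_of_sum_map_diagonalExponent_eq {l l' : List (Fin n × Fin n)}
    (hl₁ : (l.map Prod.fst).IsChain (· ≤ ·)) (hl₂ : (l.map Prod.snd).IsChain (· ≤ ·))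
    (hl₁' : (l'.map Prod.fst).IsChain (· ≤ ·)) (hl₂' : (l'.map Prod.snd).IsChain (· ≤ ·))
    (h : (l.map diagonalExponent).sum = (l'.map diagonalExponent).sum) : l = l' := by
  have hfst : l.map Prod.fst = l'.map Prod.fst :=
    List.Perm.eq_of_pairwise' (List.isChain_iff_pairwise.mp hl₁) (List.isChain_iff_pairwise.mp hl₁')
      (List.perm_iff_count.mpr fun k => by
        rw [← sum_map_diagonalExponent_inl, ← sum_map_diagonalExponent_inl, h])
  have hsnd : l.map Prod.snd = l'.map Prod.snd :=
    List.Perm.eq_of_pairwise' (List.isChain_iff_pairwise.mp hl₂) (List.isChain_iff_pairwise.mp hl₂')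
      (List.perm_iff_count.mpr fun k => by
        rw [← sum_map_diagonalExponent_inr, ← sum_map_diagonalExponent_inr, h])
  rw [← List.zip_unzip l, ← List.zip_unzip l', List.unzip_fst, List.unzip_snd, List.unzip_fst,
    List.unzip_snd, hfst, hsnd]

end Plucker

/-- The standard monomials α_{i₁j₁}⋯α_{i_rj_r} (including 1 for r = 0)
in the Plücker coordinates α_{ij} = x_i y_j − x_j y_i are linearly independent over F. -/
theorem standard_monomials_linearIndependent (F : Type*) [Field F] (n : ℕ)
    (α : Fin n → Fin n → MvPolynomial (Fin n ⊕ Fin n) F)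
    (hα : ∀ i j, α i j = X (Sum.inl i) * X (Sum.inr j) - X (Sum.inl j) * X (Sum.inr i)) :
    LinearIndependent F (fun l : {l : List (Fin n × Fin n) // IsStandard l} =>
      (l.1.map (fun p => α p.1 p.2)).prod) := by
  refine linearIndependent_of_isLowestWeightExponent (w := xIndexWeight n)
    (e := fun l => (l.1.map diagonalExponent).sum) (fun l l' h => Subtype.ext ?_) fun l => ?_
  · exact eq_of_sum_map_diagonalExponent_eq l.2.2.1 l.2.2.2 l'.2.2.1 l'.2.2.2 h
  · refine IsLowestWeightExponent.list_prod fun p hp => ?_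
    rw [hα]
    exact isLowestWeightExponent_minor (l.2.1 p hp)
end

section
/- Let F be a field, A_n = F[x₁,…,x_n, y₁,…,y_n], α_{ij} = x_i y_j − x_j y_i, and S_n the subalgebra of A_n generated by all α_{ij} (i < j). Then S_n is spanned over F by the set B_n of standard monomials α_{i₁j₁}⋯α_{i_r j_r} with i₁ ≤ ⋯ ≤ i_r, j₁ ≤ ⋯ ≤ j_r, i_s < j_s (including the empty product 1). -/
/-!
Sort the pairs of a monomial `α_{i₁j₁} ⋯ α_{i_r j_r}` lexicographically. Then the first indices
increase weakly, and unless the monomial is standard, two adjacent pairs are nested: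
`(a, d), (b, c)` with `a < b < c < d`. The three-term Plücker relation together with
antisymmetry gives `α_ad α_bc = α_ac α_bd - α_ab α_cd`, and both monomials on the right have a
strictly smaller sum of squared spreads `∑ (j - i)²`, so straightening terminates.
-/

open MvPolynomial

def spreadWeight {n : ℕ} (l : List (Fin n × Fin n)) : ℕ :=
  (l.map fun p => ((p.2 : ℕ) - p.1) ^ 2).sum

theorem spreadWeight_perm {n : ℕ} {l l' : List (Fin n × Fin n)} (h : l.Perm l') :
    spreadWeight l = spreadWeight l' :=
  (h.map _).sum_eq

theorem spreadWeight_append_cons_cons {n : ℕ} (A B : List (Fin n × Fin n)) (a b c d : Fin n) :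
    spreadWeight (A ++ (a, b) :: (c, d) :: B) =
      spreadWeight A + ((b - a : ℕ) ^ 2 + (d - c : ℕ) ^ 2) + spreadWeight B := by
  simp only [spreadWeight, List.map_append, List.map_cons, List.sum_append, List.sum_cons]
  ring

theorem nested_spread_sq_lt {a b c d : ℕ} (hab : a < b) (hbc : b < c) (hcd : c < d) :
    (c - a) ^ 2 + (d - b) ^ 2 < (d - a) ^ 2 + (c - b) ^ 2 ∧
      (b - a) ^ 2 + (d - c) ^ 2 < (d - a) ^ 2 + (c - b) ^ 2 := by
  have hca : c - a = (b - a) + (c - b) := by omega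
  have hdb : d - b = (c - b) + (d - c) := by omega
  have hda : d - a = (b - a) + (c - b) + (d - c) := by omega
  rw [hca, hdb, hda]
  constructor <;> nlinarith [Nat.sub_pos_of_lt hab, Nat.sub_pos_of_lt hcd]

theorem spreadWeight_straighten_lt {n : ℕ} (A B : List (Fin n × Fin n)) {a b c d : Fin n}
    (hab : a < b) (hbc : b < c) (hcd : c < d) :
    spreadWeight (A ++ (a, c) :: (b, d) :: B) < spreadWeight (A ++ (a, d) :: (b, c) :: B) ∧
      spreadWeight (A ++ (a, b) :: (c, d) :: B) < spreadWeight (A ++ (a, d) :: (b, c) :: B) := by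
  simp only [spreadWeight_append_cons_cons]
  have := nested_spread_sq_lt (Fin.lt_def.mp hab) (Fin.lt_def.mp hbc) (Fin.lt_def.mp hcd)
  omega

theorem exists_nested_of_not_isStandard {n : ℕ} {l : List (Fin n × Fin n)}
    (hsort : l.Pairwise fun p q => toLex p ≤ toLex q) (hl : ∀ p ∈ l, p.1 < p.2)
    (hns : ¬ IsStandard l) :
    ∃ (A B : List (Fin n × Fin n)) (a b c d : Fin n),
      l = A ++ (a, d) :: (b, c) :: B ∧ a < b ∧ b < c ∧ c < d := by
  have hfst : (l.map Prod.fst).IsChain (· ≤ ·) :=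
    List.isChain_map _ |>.mpr <| hsort.isChain.imp fun _ _ h => (Prod.Lex.toLex_le_toLex'.mp h).1
  have hsnd : ¬ (l.map Prod.snd).IsChain (· ≤ ·) := fun h => hns ⟨hl, hfst, h⟩
  rw [List.isChain_map, List.isChain_iff_forall_rel_of_append_cons_cons] at hsnd
  push Not at hsnd
  obtain ⟨⟨a, d⟩, ⟨b, c⟩, A, B, rfl, hcd⟩ := hsnd
  have hlex : toLex (a, d) ≤ toLex (b, c) := (List.isChain_append_cons_cons.mp hsort.isChain).2.1
  have hbc : b < c := hl (b, c) (by simp)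
  refine ⟨A, B, a, b, c, d, rfl, ?_, hbc, hcd⟩
  rcases Prod.Lex.toLex_le_toLex.mp hlex with hab | ⟨-, hdc⟩
  · exact hab
  · exact absurd hdc (not_le.mpr hcd)

section PluckerMonomial

variable {R : Type*} [CommRing R] {n : ℕ} (α : Fin n → Fin n → R)

def pluckerMonomial (l : List (Fin n × Fin n)) : R :=
  (l.map fun p => α p.1 p.2).prod

def standardSpan (F : Type*) [Semiring F] [Module F R] : Submodule F R :=
  Submodule.span F (Set.range fun l : {l : List (Fin n × Fin n) // IsStandard l} =>
    pluckerMonomial α l.1)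

theorem pluckerMonomial_perm {l l' : List (Fin n × Fin n)} (h : l.Perm l') :
    pluckerMonomial α l = pluckerMonomial α l' :=
  (h.map _).prod_eq

@[simp]
theorem pluckerMonomial_nil : pluckerMonomial α [] = 1 :=
  List.prod_nil

@[simp]
theorem pluckerMonomial_cons (p : Fin n × Fin n) (l : List (Fin n × Fin n)) :
    pluckerMonomial α (p :: l) = α p.1 p.2 * pluckerMonomial α l :=
  List.prod_cons

@[simp]
theorem pluckerMonomial_append (l l' : List (Fin n × Fin n)) :
    pluckerMonomial α (l ++ l') = pluckerMonomial α l * pluckerMonomial α l' := by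
  simp [pluckerMonomial]

theorem pluckerMonomial_straighten
    (hα : ∀ a b c d, α a d * α b c = α a c * α b d - α a b * α c d)
    (A B : List (Fin n × Fin n)) (a b c d : Fin n) :
    pluckerMonomial α (A ++ (a, d) :: (b, c) :: B) =
      pluckerMonomial α (A ++ (a, c) :: (b, d) :: B) -
        pluckerMonomial α (A ++ (a, b) :: (c, d) :: B) := by
  simp only [pluckerMonomial_append, pluckerMonomial_cons]
  linear_combination (pluckerMonomial α A * pluckerMonomial α B) * hα a b c d

theorem pluckerMonomial_mem_standardSpan (F : Type*) [Ring F] [Module F R]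
    (hα : ∀ a b c d, α a d * α b c = α a c * α b d - α a b * α c d)
    (l : List (Fin n × Fin n)) (hl : ∀ p ∈ l, p.1 < p.2) :
    pluckerMonomial α l ∈ standardSpan α F := by
  obtain ⟨l', hperm, hsort⟩ : ∃ l' : List (Fin n × Fin n),
      l'.Perm l ∧ l'.Pairwise fun p q => toLex p ≤ toLex q :=
    ⟨l.insertionSort _, List.perm_insertionSort _ _, List.pairwise_insertionSort _ _⟩
  have hl' : ∀ p ∈ l', p.1 < p.2 := fun p hp => hl p (hperm.mem_iff.mp hp)
  rw [← pluckerMonomial_perm α hperm]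
  by_cases hstd : IsStandard l'
  · exact Submodule.subset_span ⟨⟨l', hstd⟩, rfl⟩
  obtain ⟨A, B, a, b, c, d, rfl, hab, hbc, hcd⟩ := exists_nested_of_not_isStandard hsort hl' hstd
  have hweight := spreadWeight_straighten_lt A B hab hbc hcd
  simp only [List.forall_mem_append, List.forall_mem_cons] at hl'
  rw [pluckerMonomial_straighten α hα]
  refine sub_mem (pluckerMonomial_mem_standardSpan F hα _ ?_)
    (pluckerMonomial_mem_standardSpan F hα _ ?_)
  all_goals
    simp only [List.forall_mem_append, List.forall_mem_cons]
    exact ⟨hl'.1, by order, by order, hl'.2.2.2⟩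
termination_by spreadWeight l
decreasing_by
  all_goals rw [← spreadWeight_perm hperm]
  · exact hweight.1
  · exact hweight.2

theorem exists_pluckerMonomial_eq_of_mem_closure {x : R}
    (hx : x ∈ Submonoid.closure {p | ∃ i j : Fin n, i < j ∧ p = α i j}) :
    ∃ l : List (Fin n × Fin n), (∀ p ∈ l, p.1 < p.2) ∧ pluckerMonomial α l = x := by
  induction hx using Submonoid.closure_induction with
  | mem x hx =>
    obtain ⟨i, j, hij, rfl⟩ := hx
    exact ⟨[(i, j)], by simpa using hij, by simp⟩
  | one => exact ⟨[], by simp, by simp⟩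
  | mul x y _ _ hx hy =>
    obtain ⟨l, hl, rfl⟩ := hx
    obtain ⟨l', hl', rfl⟩ := hy
    exact ⟨l ++ l', List.forall_mem_append.mpr ⟨hl, hl'⟩, pluckerMonomial_append α l l'⟩

end PluckerMonomial

/-- The subalgebra S_n generated by the Plücker coordinates
α_{ij} (i < j) is spanned over F by the standard monomials (including the empty
product 1). -/
theorem standard_monomials_span (F : Type*) [Field F] (n : ℕ)
    (α : Fin n → Fin n → MvPolynomial (Fin n ⊕ Fin n) F)
    (hα : ∀ i j, α i j = X (Sum.inl i) * X (Sum.inr j) - X (Sum.inl j) * X (Sum.inr i)) :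
    ∀ s ∈ Algebra.adjoin F {p | ∃ i j : Fin n, i < j ∧ p = α i j},
      s ∈ Submodule.span F
        (Set.range (fun l : {l : List (Fin n × Fin n) // IsStandard l} =>
          (l.1.map (fun p => α p.1 p.2)).prod)) := by
  have hplucker : ∀ a b c d, α a d * α b c = α a c * α b d - α a b * α c d := by
    intro a b c d
    simp only [hα]
    ring
  intro s hs
  rw [← Subalgebra.mem_toSubmodule, Algebra.adjoin_eq_span] at hs
  refine Submodule.span_le.mpr (fun x hx => ?_) hs
  obtain ⟨l, hl, rfl⟩ := exists_pluckerMonomial_eq_of_mem_closure α hx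
  exact pluckerMonomial_mem_standardSpan α F hplucker l hl
end

section
/- Let F be a field, A_n = F[x₁,…,x_n, y₁,…,y_n], α_{ij} = x_i y_j − x_j y_i, S_n = F[α_{ij} : i<j] ⊆ A_n, and v_i = (x_i, y_i) ∈ A_n². Then S_n·V = Σ_{i=1}^n S_{n,i}·v_i, where V = Σ F·v_i, S_{n,m} = F[α_{ij} : j ≥ m], and S·v means the set of products (s x_i, s y_i) for s in S. That is, every element s·v_k with s ∈ S_n can be rewritten as a sum Σ_i s_i v_i with s_i ∈ S_{n,i}. -/
/-!
Let `D = Σᵢ S_{n,i}·vᵢ`, an `F`-submodule of `A_n²` containing every `v_k`. Since `S_n` is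
generated by the `α_{pq}` with `p < q`, it suffices that `D` is stable under multiplication by each
such `α_{pq}`. For a term `s·vᵢ` with `s ∈ S_{n,i}`: if `i ≤ q` then `α_{pq}s ∈ S_{n,i}`; otherwise
the Plücker relation `α_{pq}vᵢ = α_{pi}v_q - α_{qi}v_p` moves it to the indices `p < q < i`, and
`α_{pi}s ∈ S_{n,q}`, `α_{qi}s ∈ S_{n,p}` because `S_{n,m}` decreases as `m` grows.
-/

open MvPolynomial

theorem Algebra.smul_mem_of_mem_adjoin {R A M : Type*} [CommSemiring R] [Semiring A] [Algebra R A]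
    [AddCommMonoid M] [Module R M] [Module A M] [IsScalarTower R A M] {s : Set A}
    {N : Submodule R M} (hs : ∀ x ∈ s, ∀ m ∈ N, x • m ∈ N) {a : A} (ha : a ∈ adjoin R s) :
    ∀ m ∈ N, a • m ∈ N := by
  induction ha using Algebra.adjoin_induction with
  | mem x hx => exact hs x hx
  | algebraMap r => exact fun m hm => by simpa only [algebraMap_smul] using N.smul_mem r hm
  | add x y _ _ hx hy =>
    exact fun m hm => by simpa only [add_smul] using add_mem (hx m hm) (hy m hm)
  | mul x y _ _ hx hy => exact fun m hm => by simpa only [mul_smul] using hx _ (hy m hm)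

noncomputable section

namespace Plucker

variable (F : Type*) [CommRing F] {n : ℕ}

local notation "A" => MvPolynomial (Fin n ⊕ Fin n) F

def bracket (i j : Fin n) : A :=
  X (Sum.inl i) * X (Sum.inr j) - X (Sum.inl j) * X (Sum.inr i)

def vec (i : Fin n) : A × A :=
  (X (Sum.inl i), X (Sum.inr i))

theorem bracket_smul_vec (i j k : Fin n) :
    bracket F i j • vec F k = bracket F i k • vec F j - bracket F j k • vec F i := by
  refine Prod.ext ?_ ?_ <;>
    simp only [bracket, vec, Prod.smul_fst, Prod.smul_snd, Prod.fst_sub, Prod.snd_sub,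
      smul_eq_mul] <;> ring

def tailAlgebra (m : Fin n) : Subalgebra F A :=
  Algebra.adjoin F {p | ∃ i j : Fin n, i < j ∧ m ≤ j ∧ p = bracket F i j}

theorem tailAlgebra_anti : Antitone (tailAlgebra F (n := n)) := by
  intro m m' hm
  refine Algebra.adjoin_mono ?_
  rintro p ⟨i, j, hij, hmj, rfl⟩
  exact ⟨i, j, hij, hm.trans hmj, rfl⟩

theorem bracket_mem_tailAlgebra {i j m : Fin n} (hij : i < j) (hmj : m ≤ j) :
    bracket F i j ∈ tailAlgebra F m :=
  Algebra.subset_adjoin ⟨i, j, hij, hmj, rfl⟩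

def decomposable : Submodule F (A × A) :=
  (Submodule.pi Set.univ fun i => Subalgebra.toSubmodule (tailAlgebra F i)).map
    ((Fintype.linearCombination A (vec F)).restrictScalars F)

variable {F}

theorem mem_decomposable {p : A × A} :
    p ∈ decomposable F ↔
      ∃ t : Fin n → A, (∀ i, t i ∈ tailAlgebra F i) ∧ ∑ i, t i • vec F i = p := by
  simp [decomposable, Submodule.mem_pi, Fintype.linearCombination_apply]

theorem smul_vec_mem_decomposable {s : A} {k : Fin n} (hs : s ∈ tailAlgebra F k) :
    s • vec F k ∈ decomposable F := by
  classical
  refine mem_decomposable.2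
    ⟨Pi.single k s, fun i => ?_, Fintype.linearCombination_apply_single A _ k s⟩
  rcases eq_or_ne i k with rfl | hik
  · simpa using hs
  · simp [hik]

theorem bracket_mul_smul_vec_mem_decomposable {i j k : Fin n} (hij : i < j) {s : A}
    (hs : s ∈ tailAlgebra F k) : (bracket F i j * s) • vec F k ∈ decomposable F := by
  rcases le_or_gt k j with hkj | hjk
  · exact smul_vec_mem_decomposable (mul_mem (bracket_mem_tailAlgebra F hij hkj) hs)
  · have hik := hij.trans hjk
    rw [mul_comm, mul_smul, bracket_smul_vec, smul_sub, ← mul_smul, ← mul_smul]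
    exact sub_mem
      (smul_vec_mem_decomposable
        (mul_mem (tailAlgebra_anti F hjk.le hs) (bracket_mem_tailAlgebra F hik hjk.le)))
      (smul_vec_mem_decomposable
        (mul_mem (tailAlgebra_anti F hik.le hs) (bracket_mem_tailAlgebra F hjk hik.le)))

theorem bracket_smul_mem_decomposable {i j : Fin n} (hij : i < j) {p : A × A}
    (hp : p ∈ decomposable F) : bracket F i j • p ∈ decomposable F := by
  obtain ⟨t, ht, rfl⟩ := mem_decomposable.1 hp
  rw [Finset.smul_sum]
  exact sum_mem fun k _ => by
    simpa only [mul_smul] using bracket_mul_smul_vec_mem_decomposable hij (ht k)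

theorem smul_vec_mem_decomposable_of_mem_adjoin {s : A}
    (hs : s ∈ Algebra.adjoin F {p | ∃ i j : Fin n, i < j ∧ p = bracket F i j}) (k : Fin n) :
    s • vec F k ∈ decomposable F := by
  have hvec : vec F k ∈ decomposable F := by simpa using smul_vec_mem_decomposable (one_mem _)
  refine Algebra.smul_mem_of_mem_adjoin ?_ hs _ hvec
  rintro _ ⟨i, j, hij, rfl⟩ p hp
  exact bracket_smul_mem_decomposable hij hp

end Plucker

end

open Plucker in
/-- S_n·V = Σᵢ S_{n,i}·v_i: every product s·v_k with s ∈ S_n can be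
rewritten as Σᵢ sᵢ·vᵢ with sᵢ ∈ S_{n,i} = F[α_{ij} : j ≥ i-th level]. -/
theorem SnV_decomposition (F : Type*) [Field F] (n : ℕ)
    (α : Fin n → Fin n → MvPolynomial (Fin n ⊕ Fin n) F)
    (hα : ∀ i j, α i j = X (Sum.inl i) * X (Sum.inr j) - X (Sum.inl j) * X (Sum.inr i))
    (v : Fin n → MvPolynomial (Fin n ⊕ Fin n) F × MvPolynomial (Fin n ⊕ Fin n) F)
    (hv : ∀ i, v i = (X (Sum.inl i), X (Sum.inr i)))
    (act : MvPolynomial (Fin n ⊕ Fin n) F →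
      MvPolynomial (Fin n ⊕ Fin n) F × MvPolynomial (Fin n ⊕ Fin n) F →
      MvPolynomial (Fin n ⊕ Fin n) F × MvPolynomial (Fin n ⊕ Fin n) F)
    (hact : ∀ a p, act a p = (a * p.1, a * p.2))
    -- S_n and S_{n,m}
    (Sn : Subalgebra F (MvPolynomial (Fin n ⊕ Fin n) F))
    (hSn : Sn = Algebra.adjoin F {p | ∃ i j : Fin n, i < j ∧ p = α i j})
    (Snm : Fin n → Subalgebra F (MvPolynomial (Fin n ⊕ Fin n) F))
    (hSnm : ∀ m, Snm m = Algebra.adjoin F {p | ∃ i j : Fin n, i < j ∧ m ≤ j ∧ p = α i j}) :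
    ∀ s ∈ Sn, ∀ k : Fin n, ∃ t : Fin n → MvPolynomial (Fin n ⊕ Fin n) F,
      (∀ i, t i ∈ Snm i) ∧ act s (v k) = ∑ i : Fin n, act (t i) (v i) := by
  obtain rfl : α = bracket F := funext₂ hα
  obtain rfl : v = vec F := funext hv
  obtain rfl : act = (· • ·) := funext₂ hact
  obtain rfl : Snm = tailAlgebra F := funext hSnm
  subst hSn
  intro s hs k
  obtain ⟨t, ht, hsum⟩ := mem_decomposable.1 (smul_vec_mem_decomposable_of_mem_adjoin hs k)
  exact ⟨t, ht, hsum.symm⟩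
end

section
/- Let F be a field and consider the superalgebra B(4,2) = M₂(F) ⊕ Cay, with even part M₂(F), odd part Cay = Fm₁ ⊕ Fm₂, bimodule actions e_{ij}·m_k = δ_{ik}m_j and m·a = ā·m (ā the symplectic involution), and odd products m₁² = e₂₁, m₂² = −e₁₂, m₁m₂ = −e₁₁, m₂m₁ = e₂₂. If char F = 3, then B(4,2) is an alternative superalgebra. -/
open Matrix

/-- The symplectic involution on M₂(F): ā = tr(a)·1 − a. -/
def sympBar {F : Type*} [Field F] (a : Matrix (Fin 2) (Fin 2) F) : Matrix (Fin 2) (Fin 2) F :=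
  (Matrix.trace a) • (1 : Matrix (Fin 2) (Fin 2) F) - a

/-- The left action of M₂(F) on Cay = F·m₁ ⊕ F·m₂ given by e_{ij}·m_k = δ_{ik} m_j. -/
def cayLeft {F : Type*} [Field F] (a : Matrix (Fin 2) (Fin 2) F) (m : F × F) : F × F :=
  (m.1 * a 0 0 + m.2 * a 1 0, m.1 * a 0 1 + m.2 * a 1 1)

/-- The odd product in B(4,2): m₁² = e₂₁, m₂² = −e₁₂, m₁m₂ = −e₁₁, m₂m₁ = e₂₂. -/
def cayMul {F : Type*} [Field F] (m n : F × F) : Matrix (Fin 2) (Fin 2) F :=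
  !![-(m.1 * n.2), -(m.2 * n.2); m.1 * n.1, m.2 * n.1]

/-- Multiplication of the 6-dimensional superalgebra B(4,2) = M₂(F) ⊕ Cay. -/
def b42Mul {F : Type*} [Field F] (u v : Matrix (Fin 2) (Fin 2) F × (F × F)) :
    Matrix (Fin 2) (Fin 2) F × (F × F) :=
  (u.1 * v.1 + cayMul u.2 v.2, cayLeft u.1 v.2 + cayLeft (sympBar v.1) u.2)

/-- Homogeneous elements of B(4,2) of a given parity. -/
def b42Homog {F : Type*} [Field F] (p : ZMod 2) (u : Matrix (Fin 2) (Fin 2) F × (F × F)) :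
    Prop :=
  if p = 0 then u.2 = 0 else u.1 = 0

set_option maxHeartbeats 4000000 in
/-- If char F = 3, then B(4,2) is an alternative superalgebra: the
graded linearized alternative identities (x,y,z) + (−1)^{x̄ȳ}(y,x,z) = 0 and
(x,y,z) + (−1)^{ȳz̄}(x,z,y) = 0 hold on homogeneous elements. -/
theorem b42_alternative_char3 (F : Type*) [Field F] [CharP F 3] :
    ∀ (px py pz : ZMod 2) (x y z : Matrix (Fin 2) (Fin 2) F × (F × F)),
      b42Homog px x → b42Homog py y → b42Homog pz z →
      (b42Mul (b42Mul x y) z - b42Mul x (b42Mul y z))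
        + ((-1 : ℤ) ^ (px * py).val) • (b42Mul (b42Mul y x) z - b42Mul y (b42Mul x z)) = 0 ∧
      (b42Mul (b42Mul x y) z - b42Mul x (b42Mul y z))
        + ((-1 : ℤ) ^ (py * pz).val) • (b42Mul (b42Mul x z) y - b42Mul x (b42Mul z y)) = 0 := by
  have h3 : (3:F) = 0 := CharP.cast_eq_zero F 3
  intro px py pz x y z hx hy hz
  rcases (by decide : ∀ p : ZMod 2, p = 0 ∨ p = 1) px with rfl | rfl <;>
    rcases (by decide : ∀ p : ZMod 2, p = 0 ∨ p = 1) py with rfl | rfl <;>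
    rcases (by decide : ∀ p : ZMod 2, p = 0 ∨ p = 1) pz with rfl | rfl <;>
    simp only [b42Homog, if_pos, if_neg, one_ne_zero, reduceIte] at hx hy hz <;>
    refine ⟨Prod.ext ?_ ?_, Prod.ext ?_ ?_⟩ <;>
    simp only [b42Mul, cayMul, cayLeft, sympBar, hx, hy, hz, Matrix.trace_fin_two,
      Prod.fst_add, Prod.snd_add, Prod.fst_sub, Prod.snd_sub, Prod.smul_fst, Prod.smul_snd,
      Prod.fst_zero, Prod.snd_zero, Prod.mk_add_mk, Prod.mk_sub_mk, Prod.smul_mk,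
      mul_zero, zero_mul, mul_one, one_mul, ZMod.val_one, ZMod.val_zero, pow_zero, pow_one,
      one_smul, neg_smul, zsmul_eq_mul, Int.cast_one, Int.cast_neg, neg_mul] <;>
    first
    | (refine Prod.ext ?_ ?_ <;>
        simp [Matrix.mul_apply, Fin.sum_univ_two, Matrix.one_apply, Matrix.vecMul,
          Matrix.vecHead, Matrix.vecTail, dotProduct] <;> ring_nf <;>
        first | rfl | (rw [show (3:F) = 0 from h3] <;> ring1))
    | (ext i j <;> fin_cases i <;> fin_cases j <;>
        simp [Matrix.mul_apply, Fin.sum_univ_two, Matrix.one_apply, Matrix.vecMul,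
          Matrix.vecHead, Matrix.vecTail, dotProduct] <;>
        ring_nf <;>
        first | rfl | (rw [show (3:F) = 0 from h3] <;> ring1))
end
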